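/- Under the action of the stabilizer G_S of the Segre variety S = S_{1,1,1}(2), the 255 points of PG(7,2) fall into exactly five orbits, of lengths 12, 54, 108, 54, and 27 (the last being S itself). -/
import Mathlib

open Pointwise

set_option maxRecDepth 100000
set_option maxHeartbeats 4000000
set_option synthInstance.maxHeartbeats 1000000

/-- Index set for coordinates of `V_2 ⊗ V_2 ⊗ V_2` over `GF(2)`. -/
abbrev ι3 := Fin 2 × Fin 2 × Fin 2

/-- `V_8 = V(2,2) ⊗ V(2,2) ⊗ V(2,2)`, realized in coordinates as `GF(2)^(2×2×2)`. -/
abbrev V8 := ι3 → ZMod 2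

/-- The Segre variety `S_{1,1,1}(2)`: the nonzero decomposable tensors `u ⊗ v ⊗ w`. -/
def Segre : Set V8 :=
  {x | x ≠ 0 ∧ ∃ u v w : Fin 2 → ZMod 2, x = fun p => u p.1 * v p.2.1 * w p.2.2}

/-- The stabilizer of the Segre variety in `GL(8,2)`. -/
def SegreStab : Subgroup (V8 ≃ₗ[ZMod 2] V8) :=
  MulAction.stabilizer (V8 ≃ₗ[ZMod 2] V8) Segre

namespace SegAux

/-! ### Codes: identifying `V8` with numbers `< 256` -/

def code (x : V8) : ℕ :=
  (x (0,0,0)).val + 2*(x (0,0,1)).val + 4*(x (0,1,0)).val + 8*(x (0,1,1)).val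
  + 16*(x (1,0,0)).val + 32*(x (1,0,1)).val + 64*(x (1,1,0)).val + 128*(x (1,1,1)).val

def dec (n : ℕ) : V8 := fun p => if n.testBit (4*p.1.val + 2*p.2.1.val + p.2.2.val) then 1 else 0

theorem dec_code : ∀ x : V8, dec (code x) = x := by decide
theorem code_lt : ∀ x : V8, code x < 256 := by decide
theorem code_dec : ∀ n ∈ List.range 256, code (dec n) = n := by decide

theorem code_dec' {n : ℕ} (h : n < 256) : code (dec n) = n :=
  code_dec n (List.mem_range.2 h)

theorem code_inj {x y : V8} (h : code x = code y) : x = y := by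
  rw [← dec_code x, ← dec_code y, h]

theorem dec_zero : dec 0 = 0 := by funext p; simp [dec]

theorem code_eq_zero {x : V8} (h : code x = 0) : x = 0 := by
  have := dec_code x; rw [h, dec_zero] at this; exact this.symm

theorem dec_xor (n m : ℕ) : dec (n ^^^ m) = dec n + dec m := by
  funext p
  simp only [dec, Pi.add_apply, Nat.testBit_xor]
  cases h1 : n.testBit (4*p.1.val + 2*p.2.1.val + p.2.2.val) <;>
    cases h2 : m.testBit (4*p.1.val + 2*p.2.1.val + p.2.2.val) <;> simp <;> decide

theorem code_add (x y : V8) : code (x + y) = code x ^^^ code y := by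
  have h : x + y = dec (code x ^^^ code y) := by rw [dec_xor, dec_code, dec_code]
  have h8 : (256:ℕ) = 2^8 := rfl
  rw [h, code_dec' (h8 ▸ Nat.xor_lt_two_pow (h8 ▸ code_lt x) (h8 ▸ code_lt y))]

/-! ### The data -/

def segN : List ℕ := [1, 2, 3, 4, 5, 8, 10, 12, 15, 16, 17, 32, 34, 48, 51, 64, 68, 80, 85, 128, 136, 160, 170, 192, 204, 240, 255]
def segMask : ℕ := 57897811465722901813400887179114964632008146155984642949180183301914636817726
def F0mask : ℕ := 1018006947416117805064575396828377768562509404519242311276361646015403524096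
def Dnum : ℕ := 106407560914955301270392287971588523766682088150841443419338316243146940794277866367123743114656210872627052527181582456991812677439740883276051090520971369257814335822987160689394062168673461816961830409902450329920012484416024979820823819594328966209580012343143959559868122670900212012787672494445950026496

def DD (n : ℕ) : ℕ := (Dnum >>> (4*n)) &&& 15

def segFN : Finset ℕ := ⟨(segN : Multiset ℕ), by decide⟩

/-- The counting invariant at the level of codes. -/
def cnt (mask : ℕ) (n : ℕ) : ℕ := (segFN.filter (fun m => mask.testBit (n ^^^ m) = true)).card

def repN : Fin 5 → ℕ := ![107, 6, 24, 22, 1]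
def cval : Fin 5 → ℕ := ![18, 6, 7, 9, 0]
def LN : Fin 5 → List ℕ
  | 0 => [107, 109, 121, 126, 151, 158, 182, 189, 214, 219, 231, 233]
  | 1 => [6, 7, 9, 11, 13, 14, 18, 19, 20, 21, 33, 35, 40, 42, 49, 50, 60, 63, 65, 69, 72, 76, 81, 84, 90, 95, 96, 102, 112, 119, 130, 132, 138, 140, 144, 153, 162, 165, 168, 175, 176, 187, 195, 196, 200, 207, 208, 221, 224, 238, 243, 245, 250, 252]
  | 2 => [24, 25, 26, 27, 28, 29, 30, 31, 36, 37, 38, 39, 44, 45, 46, 47, 52, 53, 54, 55, 56, 57, 58, 59, 66, 67, 70, 71, 74, 75, 78, 79, 82, 83, 86, 87, 88, 89, 92, 93, 98, 99, 100, 101, 106, 108, 114, 115, 116, 117, 120, 127, 129, 131, 133, 135, 137, 139, 141, 143, 145, 147, 149, 152, 154, 156, 161, 163, 164, 166, 169, 171, 172, 174, 177, 179, 180, 184, 186, 191, 193, 194, 197, 198, 201, 202, 205, 206, 209, 210, 213, 216, 220, 223, 225, 226, 228, 234, 236, 239, 241, 242, 244, 247, 248, 251, 253, 254]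
  | 3 => [22, 23, 41, 43, 61, 62, 73, 77, 91, 94, 97, 103, 104, 105, 110, 111, 113, 118, 122, 123, 124, 125, 134, 142, 146, 148, 150, 155, 157, 159, 167, 173, 178, 181, 183, 185, 188, 190, 199, 203, 211, 212, 215, 217, 218, 222, 227, 229, 230, 232, 235, 237, 246, 249]
  | 4 => segN

def Lmask : Fin 5 → ℕ := ![17255234693383465833076602507976672686768744100875564625430260666597376, 9117372596353216559270465585203169314573229416045936753047685381771474266816, 47758898227823959245835056847541396138126099689090742025953353678211615031296, 1017989692181424421598742320225869791889822635775141435711736215754736926720, segMask]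

/-! ### Pure numeric facts, by `decide` -/

theorem hseg1 : ∀ m ∈ segN, segMask.testBit m ∧ m < 256 := by decide
theorem hseg2 : ∀ m ∈ List.range 256, segMask.testBit m → m ∈ segN := by decide
theorem hF0char : ∀ n ∈ List.range 256, (F0mask.testBit n ↔ cnt segMask n = 0) := by decide
theorem hclass : ∀ n ∈ List.range 256, n ≠ 0 →
    ∃ j : Fin 5, cnt F0mask n = cval j ∧ (Lmask j).testBit n := by decide
theorem hL1 : ∀ i : Fin 5, ∀ m ∈ LN i, (Lmask i).testBit m ∧ m < 256 ∧ m ≠ 0 := by decide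
theorem hL2 : ∀ i : Fin 5, ∀ m ∈ List.range 256, (Lmask i).testBit m → m ∈ LN i := by decide
theorem hLdisj : ∀ i j : Fin 5, i ≠ j → ∀ m ∈ LN i, ¬ (Lmask j).testBit m := by decide
theorem hcval_inj : ∀ i j : Fin 5, cval i = cval j → i = j := by decide
theorem hrepval : ∀ i : Fin 5, repN i ∈ LN i ∧ repN i ≠ 0 ∧ repN i < 256 ∧
    cnt F0mask (repN i) = cval i := by decide
theorem hLN_nodup : ∀ i : Fin 5, (LN i).Nodup := by decide
theorem hLN_len : (LN 0).length = 12 ∧ (LN 1).length = 54 ∧ (LN 2).length = 108 ∧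
    (LN 3).length = 54 ∧ (LN 4).length = 27 := by decide

theorem mem_segFN {m : ℕ} : m ∈ segFN ↔ m ∈ segN := Iff.rfl

theorem seg_bit_iff {m : ℕ} (h : m < 256) : segMask.testBit m ↔ m ∈ segN :=
  ⟨fun hb => hseg2 m (List.mem_range.2 h) hb, fun hm => (hseg1 m hm).1⟩

/-! ### The Segre set via codes -/

theorem segre_dec1 : ∀ u v w : Fin 2 → ZMod 2,
    (fun p : ι3 => u p.1 * v p.2.1 * w p.2.2) = (0 : V8) ∨
      segMask.testBit (code (fun p : ι3 => u p.1 * v p.2.1 * w p.2.2)) := by decide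

theorem segre_dec2 : ∀ n ∈ List.range 256, segMask.testBit n →
    (dec n ≠ 0 ∧ ∃ u v w : Fin 2 → ZMod 2,
      dec n = fun p : ι3 => u p.1 * v p.2.1 * w p.2.2) := by decide

theorem segre_iff (x : V8) : x ∈ Segre ↔ segMask.testBit (code x) := by
  constructor
  · rintro ⟨hx, u, v, w, rfl⟩
    rcases segre_dec1 u v w with h | h
    · exact absurd h hx
    · exact h
  · intro h
    have := segre_dec2 (code x) (List.mem_range.2 (code_lt x)) h
    rw [dec_code] at this
    exact this

/-! ### The generators -/

def mkInv (f : V8 → V8) (hadd : ∀ x y, f (x + y) = f x + f y) (hinv : ∀ x, f (f x) = x) :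
    V8 ≃ₗ[ZMod 2] V8 :=
  { AddMonoidHom.toZModLinearMap 2 (AddMonoidHom.mk' f hadd) with
    invFun := f, left_inv := hinv, right_inv := hinv }

def gf0 : V8 → V8 := fun x p => x (p.1 + 1, p.2)
def gf1 : V8 → V8 := fun x p => if p.1 = 0 then x (0, p.2) + x (1, p.2) else x p
def gf2 : V8 → V8 := fun x p => x (p.2.1, p.1, p.2.2)
def gf3 : V8 → V8 := fun x p => x (p.1, p.2.2, p.2.1)

def gfun : Fin 4 → V8 → V8
  | 0 => gf0
  | 1 => gf1
  | 2 => gf2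
  | 3 => gf3

theorem two_cancel : ∀ a : ZMod 2, a + a = 0 := by decide

theorem gfun_add : ∀ (k : Fin 4) (x y : V8), gfun k (x + y) = gfun k x + gfun k y := by
  intro k x y
  fin_cases k
  · rfl
  · funext p
    by_cases h : p.1 = 0
    · show gf1 (x+y) p = gf1 x p + gf1 y p
      simp only [gf1, if_pos h, Pi.add_apply]
      ring
    · show gf1 (x+y) p = gf1 x p + gf1 y p
      simp only [gf1, if_neg h, Pi.add_apply]
  · rfl
  · rfl

theorem gfun_invol' : ∀ (k : Fin 4) (x : V8), code (gfun k (gfun k x)) = code x := by decide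

theorem gfun_invol (k : Fin 4) (x : V8) : gfun k (gfun k x) = x := code_inj (gfun_invol' k x)

def G (k : Fin 4) : V8 ≃ₗ[ZMod 2] V8 :=
  mkInv (gfun k) (gfun_add k) (gfun_invol k)

theorem G_apply (k : Fin 4) (x : V8) : G k x = gfun k x := rfl

theorem hGseg : ∀ (k : Fin 4) (x : V8),
    segMask.testBit (code (gfun k x)) ↔ segMask.testBit (code x) := by decide

theorem G_mem : ∀ k : Fin 4, G k ∈ SegreStab := by
  intro k
  rw [SegreStab, MulAction.mem_stabilizer_iff]
  ext z
  rw [Set.mem_smul_set]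
  constructor
  · rintro ⟨y, hy, rfl⟩
    rw [LinearEquiv.smul_def, segre_iff] at *
    rw [G_apply]
    exact (hGseg k y).2 hy
  · intro hz
    refine ⟨(G k).symm z, ?_, ?_⟩
    · rw [segre_iff] at *
      have hsymm : (G k).symm z = gfun k z := rfl
      rw [hsymm]
      exact (hGseg k z).2 hz
    · rw [LinearEquiv.smul_def, LinearEquiv.apply_symm_apply]

/-! ### Invariance of the counting function -/

section Invariance

variable {g : V8 ≃ₗ[ZMod 2] V8}

theorem stab_iff (hg : g ∈ SegreStab) : ∀ y : V8, g y ∈ Segre ↔ y ∈ Segre := by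
  intro y
  have h : g • Segre = Segre := by rwa [SegreStab, MulAction.mem_stabilizer_iff] at hg
  constructor
  · intro hy
    rw [← h, Set.mem_smul_set] at hy
    rcases hy with ⟨z, hz, hzy⟩
    rw [LinearEquiv.smul_def] at hzy
    rwa [← g.injective hzy]
  · intro hy
    rw [← h, Set.mem_smul_set]
    exact ⟨y, hy, (LinearEquiv.smul_def g y).symm⟩

theorem stab_bit (hg : ∀ y : V8, g y ∈ Segre ↔ y ∈ Segre) (y : V8) :
    segMask.testBit (code (g y)) ↔ segMask.testBit (code y) := by
  rw [← segre_iff, ← segre_iff]; exact hg y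

theorem bit_xor_trans {mask : ℕ} (h : V8 ≃ₗ[ZMod 2] V8)
    (hmaskh : ∀ y : V8, mask.testBit (code (h y)) ↔ mask.testBit (code y))
    (x : V8) (m : ℕ) (hlt : m < 256) :
    mask.testBit (code (h x) ^^^ code (h (dec m))) ↔ mask.testBit (code x ^^^ m) := by
  have e : h (x + dec m) = h x + h (dec m) := map_add h x (dec m)
  have e' : code (h x) ^^^ code (h (dec m)) = code (h (x + dec m)) := by
    rw [e]; exact (code_add _ _).symm
  have e'' : code x ^^^ m = code (x + dec m) := by rw [code_add, code_dec' hlt]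
  rw [e', e'', hmaskh]

theorem cnt_inv (mask : ℕ)
    (hseg : ∀ y : V8, g y ∈ Segre ↔ y ∈ Segre)
    (hmask : ∀ y : V8, mask.testBit (code (g y)) ↔ mask.testBit (code y)) (x : V8) :
    cnt mask (code (g x)) = cnt mask (code x) := by
  have hmask' : ∀ y : V8, mask.testBit (code (g.symm y)) ↔ mask.testBit (code y) := by
    intro y
    have := hmask (g.symm y)
    rw [g.apply_symm_apply] at this
    exact this.symm
  have hseg' : ∀ y : V8, g.symm y ∈ Segre ↔ y ∈ Segre := by
    intro y
    have := hseg (g.symm y)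
    rw [g.apply_symm_apply] at this
    exact this.symm
  have hsb := stab_bit hseg
  have hsb' : ∀ y : V8, segMask.testBit (code (g.symm y)) ↔ segMask.testBit (code y) := by
    intro y
    have := hsb (g.symm y)
    rw [g.apply_symm_apply] at this
    exact this.symm
  have memtrans : ∀ (h : V8 ≃ₗ[ZMod 2] V8),
      (∀ y : V8, segMask.testBit (code (h y)) ↔ segMask.testBit (code y)) →
      ∀ m ∈ segFN, code (h (dec m)) ∈ segFN := by
    intro h hh m hm
    have hlt : m < 256 := (hseg1 m hm).2
    have hb : segMask.testBit (code (h (dec m))) := by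
      rw [hh (dec m), code_dec' hlt]
      exact (hseg1 m hm).1
    rw [mem_segFN, ← seg_bit_iff (code_lt _)]
    exact hb
  unfold cnt
  apply Finset.card_bij' (i := fun m _ => code (g.symm (dec m))) (j := fun m _ => code (g (dec m)))
  · intro m hm
    rw [Finset.mem_filter] at hm ⊢
    obtain ⟨hm1, hm2⟩ := hm
    have hlt : m < 256 := (hseg1 m hm1).2
    refine ⟨memtrans g.symm hsb' m hm1, ?_⟩
    have h3 := bit_xor_trans g.symm hmask' (g x) m hlt
    rw [g.symm_apply_apply] at h3
    exact h3.2 hm2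
  · intro m hm
    rw [Finset.mem_filter] at hm ⊢
    obtain ⟨hm1, hm2⟩ := hm
    have hlt : m < 256 := (hseg1 m hm1).2
    refine ⟨memtrans g hsb m hm1, ?_⟩
    exact (bit_xor_trans g hmask x m hlt).2 hm2
  · intro m hm
    rw [Finset.mem_filter] at hm
    have hlt : m < 256 := (hseg1 m hm.1).2
    rw [dec_code, g.apply_symm_apply, code_dec' hlt]
  · intro m hm
    rw [Finset.mem_filter] at hm
    have hlt : m < 256 := (hseg1 m hm.1).2
    rw [dec_code, g.symm_apply_apply, code_dec' hlt]

theorem f0_bit_inv (hseg : ∀ y : V8, g y ∈ Segre ↔ y ∈ Segre) (y : V8) :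
    F0mask.testBit (code (g y)) ↔ F0mask.testBit (code y) := by
  rw [hF0char _ (List.mem_range.2 (code_lt _)), hF0char _ (List.mem_range.2 (code_lt _)),
    cnt_inv segMask hseg (stab_bit hseg) y]

theorem gN_inv (hseg : ∀ y : V8, g y ∈ Segre ↔ y ∈ Segre) (x : V8) :
    cnt F0mask (code (g x)) = cnt F0mask (code x) :=
  cnt_inv F0mask hseg (f0_bit_inv hseg) x

end Invariance


/-! ### Representatives, the orbit sets, and the BFS key fact -/

def v (i : Fin 5) : V8 := dec (repN i)

theorem code_v (i : Fin 5) : code (v i) = repN i := code_dec' (hrepval i).2.2.1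

theorem v_ne_zero (i : Fin 5) : v i ≠ 0 := by
  intro h
  have := code_v i
  rw [h] at this
  have h0 : code (0 : V8) = 0 := by decide
  rw [h0] at this
  exact (hrepval i).2.1 this.symm

theorem hkey : ∀ x : V8, x = 0 ∨ (∃ i : Fin 5, code x = repN i) ∨
    ∃ k : Fin 4, DD (code (gfun k x)) < DD (code x) := by decide

def FinL (i : Fin 5) : Finset V8 :=
  ⟨((LN i).map dec : Multiset V8), by
    rw [Multiset.coe_nodup]
    refine (hLN_nodup i).map_on ?_
    intro a ha b hb hab
    rw [← code_dec' (hL1 i a ha).2.1, ← code_dec' (hL1 i b hb).2.1, hab]⟩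

theorem mem_FinL {x : V8} {i : Fin 5} : x ∈ FinL i ↔ code x ∈ LN i := by
  constructor
  · intro hx
    have : x ∈ (LN i).map dec := hx
    obtain ⟨m, hm, he⟩ := List.mem_map.1 this
    rw [← he, code_dec' (hL1 i m hm).2.1]
    exact hm
  · intro hx
    show x ∈ (LN i).map dec
    exact List.mem_map.2 ⟨code x, hx, dec_code x⟩

theorem FinL_ne_zero {x : V8} {i : Fin 5} (hx : x ∈ FinL i) : x ≠ 0 := by
  intro h
  have := mem_FinL.1 hx
  rw [h] at this
  have h0 : code (0 : V8) = 0 := by decide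
  rw [h0] at this
  exact (hL1 i 0 this).2.2 rfl

/-! ### Orbit lemmas -/

def Gs (k : Fin 4) : SegreStab := ⟨G k, G_mem k⟩

theorem orbit_sub (i : Fin 5) :
    MulAction.orbit SegreStab (v i) ⊆ ↑(FinL i) := by
  rintro y hy
  obtain ⟨u, hu⟩ := MulAction.mem_orbit_iff.1 hy
  have hu' : (u : V8 ≃ₗ[ZMod 2] V8) (v i) = y := hu
  have hseg := stab_iff u.2
  have hval : cnt F0mask (code y) = cval i := by
    rw [← hu', gN_inv hseg, code_v]
    exact (hrepval i).2.2.2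
  have hne : y ≠ 0 := by
    intro h0
    apply v_ne_zero i
    apply (u : V8 ≃ₗ[ZMod 2] V8).injective
    rw [hu', h0, map_zero]
  have hcne : code y ≠ 0 := fun h => hne (code_eq_zero h)
  obtain ⟨j, hj1, hj2⟩ := hclass _ (List.mem_range.2 (code_lt y)) hcne
  have hij : j = i := hcval_inj j i (by rw [← hj1, hval])
  subst hij
  exact mem_FinL.2 (hL2 j _ (List.mem_range.2 (code_lt y)) hj2)

theorem reach : ∀ (n : ℕ) (x : V8), x ≠ 0 → DD (code x) ≤ n →
    ∃ i, x ∈ MulAction.orbit SegreStab (v i) := by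
  intro n
  induction n with
  | zero =>
    intro x hx hD
    rcases hkey x with h0 | ⟨i, hi⟩ | ⟨k, hk⟩
    · exact absurd h0 hx
    · have hxv : x = v i := code_inj (hi.trans (code_v i).symm)
      exact ⟨i, hxv ▸ MulAction.mem_orbit_self _⟩
    · omega
  | succ n ih =>
    intro x hx hD
    rcases hkey x with h0 | ⟨i, hi⟩ | ⟨k, hk⟩
    · exact absurd h0 hx
    · have hxv : x = v i := code_inj (hi.trans (code_v i).symm)
      exact ⟨i, hxv ▸ MulAction.mem_orbit_self _⟩
    · have hgz : gfun k (0 : V8) = 0 := by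
        rw [← G_apply]; exact map_zero (G k)
      have hx' : gfun k x ≠ 0 := by
        intro h0
        apply hx
        have h1 : gfun k (gfun k x) = gfun k 0 := by rw [h0, hgz, ← hgz]
        rw [gfun_invol, hgz] at h1
        exact h1
      have hD' : DD (code (gfun k x)) ≤ n := by omega
      obtain ⟨i, hi⟩ := ih (gfun k x) hx' hD'
      obtain ⟨u, hu⟩ := MulAction.mem_orbit_iff.1 hi
      refine ⟨i, MulAction.mem_orbit_iff.2 ⟨(Gs k)⁻¹ * u, ?_⟩⟩
      rw [mul_smul, hu]
      show ((Gs k)⁻¹ : SegreStab) • gfun k x = x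
      have h2 : ((Gs k)⁻¹ : SegreStab) • gfun k x = (G k).symm (gfun k x) := rfl
      rw [h2]
      have h3 : (G k).symm (gfun k x) = gfun k (gfun k x) := rfl
      rw [h3, gfun_invol]

theorem orbit_eq (i : Fin 5) : MulAction.orbit SegreStab (v i) = ↑(FinL i) := by
  apply Set.Subset.antisymm (orbit_sub i)
  intro x hx
  have hx' : x ∈ FinL i := hx
  have hne : x ≠ 0 := FinL_ne_zero hx'
  obtain ⟨j, hj⟩ := reach (DD (code x)) x hne le_rfl
  have hji : j = i := by
    by_contra hji
    have hmj : x ∈ FinL j := orbit_sub j hj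
    have h1 := hLdisj j i hji (code x) (mem_FinL.1 hmj)
    exact h1 (hL1 i (code x) (mem_FinL.1 hx')).1
  rwa [hji] at hj

theorem LN4_eq : LN 4 = segN := rfl

theorem segre_eq_FinL : Segre = ↑(FinL 4) := by
  ext x
  constructor
  · intro h
    have hb := (segre_iff x).1 h
    have hm : code x ∈ segN := (seg_bit_iff (code_lt x)).1 hb
    exact Finset.mem_coe.2 (mem_FinL.2 (LN4_eq ▸ hm))
  · intro h
    have hm : code x ∈ LN 4 := mem_FinL.1 (Finset.mem_coe.1 h)
    exact (segre_iff x).2 ((seg_bit_iff (code_lt x)).2 (LN4_eq ▸ hm))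

theorem FinL_card (i : Fin 5) : (FinL i).card = (LN i).length := by
  show ((LN i).map dec : Multiset V8).card = _
  rw [Multiset.coe_card, List.length_map]

end SegAux

/-- Under the stabilizer of the Segre variety, the 255 points of `PG(7,2)` fall into
exactly five orbits, of lengths 12, 54, 108, 54 and 27, the last being `S` itself. -/
theorem stmt12 :
    ∃ v : Fin 5 → V8,
      (∀ i, v i ≠ 0) ∧
      (∀ i j, i ≠ j →
        Disjoint (MulAction.orbit SegreStab (v i)) (MulAction.orbit SegreStab (v j))) ∧
      (⋃ i, MulAction.orbit SegreStab (v i)) = {x : V8 | x ≠ 0} ∧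
      (MulAction.orbit SegreStab (v 0)).ncard = 12 ∧
      (MulAction.orbit SegreStab (v 1)).ncard = 54 ∧
      (MulAction.orbit SegreStab (v 2)).ncard = 108 ∧
      (MulAction.orbit SegreStab (v 3)).ncard = 54 ∧
      MulAction.orbit SegreStab (v 4) = Segre ∧ Segre.ncard = 27 := by
  refine ⟨SegAux.v, SegAux.v_ne_zero, ?_, ?_, ?_, ?_, ?_, ?_, ?_, ?_⟩
  · intro i j hij
    rw [SegAux.orbit_eq, SegAux.orbit_eq, Set.disjoint_left]
    intro x hxi hxj
    have h1 := SegAux.mem_FinL.1 (show x ∈ SegAux.FinL i from hxi)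
    have h2 := SegAux.mem_FinL.1 (show x ∈ SegAux.FinL j from hxj)
    exact SegAux.hLdisj i j hij (SegAux.code x) h1 ((SegAux.hL1 j _ h2).1)
  · ext x
    simp only [Set.mem_iUnion, Set.mem_setOf_eq]
    constructor
    · rintro ⟨i, hi⟩
      exact SegAux.FinL_ne_zero (Finset.mem_coe.1 (SegAux.orbit_sub i hi))
    · intro hx
      exact SegAux.reach (SegAux.DD (SegAux.code x)) x hx le_rfl
  · rw [SegAux.orbit_eq, Set.ncard_coe_finset, SegAux.FinL_card]; exact SegAux.hLN_len.1
  · rw [SegAux.orbit_eq, Set.ncard_coe_finset, SegAux.FinL_card]; exact SegAux.hLN_len.2.1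
  · rw [SegAux.orbit_eq, Set.ncard_coe_finset, SegAux.FinL_card]; exact SegAux.hLN_len.2.2.1
  · rw [SegAux.orbit_eq, Set.ncard_coe_finset, SegAux.FinL_card]; exact SegAux.hLN_len.2.2.2.1
  · rw [SegAux.orbit_eq, SegAux.segre_eq_FinL]
  · rw [SegAux.segre_eq_FinL, Set.ncard_coe_finset, SegAux.FinL_card]
    exact SegAux.hLN_len.2.2.2.2
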